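/- Let Ω be a finite index set with subsets Ω_H and Ω_L, band energies E_H(û) = ∑_{ω ∈ Ω_H} ‖û(ω)‖² and E_L(û) = ∑_{ω ∈ Ω_L} ‖û(ω)‖², and, for a fixed ε > 0, high-to-low frequency energy ratio HL(û) = E_H(û) / (E_L(û) + ε). Suppose H_I : Ω → ℂ satisfies ‖H_I(ω)‖ ≤ α for ω ∈ Ω_H and ‖H_I(ω)‖ ≥ β for ω ∈ Ω_L with 0 < α < β ≤ 1, and set v̂(ω) = H_I(ω) · û(ω). If HL(û) > 0, then HL(v̂) < HL(û), i.e. the operator strictly decreases the high-to-low frequency energy ratio. -/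

import Mathlib

/-!
Multiplying by `H_I` scales the high-band energy by at most `α²` and the low-band energy by at
least `β²`; since `β ≤ 1`, the whole denominator `E_L + ε` is multiplied by at least `β²`, so a
positive ratio is multiplied by at most `(α / β)² < 1`.
-/

section BandEnergy

variable {Ω 𝕜 : Type*} [SeminormedRing 𝕜]

def bandEnergy (s : Finset Ω) (u : Ω → 𝕜) : ℝ :=
  ∑ ω ∈ s, ‖u ω‖ ^ 2

noncomputable def highLowRatio (ΩH ΩL : Finset Ω) (ε : ℝ) (u : Ω → 𝕜) : ℝ :=
  bandEnergy ΩH u / (bandEnergy ΩL u + ε)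

theorem bandEnergy_nonneg (s : Finset Ω) (u : Ω → 𝕜) : 0 ≤ bandEnergy s u :=
  Finset.sum_nonneg fun _ _ => sq_nonneg _

theorem bandEnergy_mul_le [NormMulClass 𝕜] {s : Finset Ω} {H : Ω → 𝕜} {a : ℝ} (hH : ∀ ω ∈ s, ‖H ω‖ ≤ a)
    (u : Ω → 𝕜) : bandEnergy s (fun ω => H ω * u ω) ≤ a ^ 2 * bandEnergy s u := by
  rw [bandEnergy, bandEnergy, Finset.mul_sum]
  refine Finset.sum_le_sum fun ω hω => ?_
  rw [norm_mul, mul_pow]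
  gcongr
  exact hH ω hω

theorem le_bandEnergy_mul [NormMulClass 𝕜] {s : Finset Ω} {H : Ω → 𝕜} {b : ℝ} (hb : 0 ≤ b)
    (hH : ∀ ω ∈ s, b ≤ ‖H ω‖) (u : Ω → 𝕜) :
    b ^ 2 * bandEnergy s u ≤ bandEnergy s (fun ω => H ω * u ω) := by
  rw [bandEnergy, bandEnergy, Finset.mul_sum]
  refine Finset.sum_le_sum fun ω hω => ?_
  rw [norm_mul, mul_pow]
  gcongr
  exact hH ω hω

theorem highLowRatio_mul_le [NormMulClass 𝕜] {ΩH ΩL : Finset Ω} {ε : ℝ} (hε : 0 < ε) {H : Ω → 𝕜} {α β : ℝ}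
    (hβ₀ : 0 < β) (hβ₁ : β ≤ 1) (hHigh : ∀ ω ∈ ΩH, ‖H ω‖ ≤ α)
    (hLow : ∀ ω ∈ ΩL, β ≤ ‖H ω‖) (u : Ω → 𝕜) :
    highLowRatio ΩH ΩL ε (fun ω => H ω * u ω) ≤ (α / β) ^ 2 * highLowRatio ΩH ΩL ε u := by
  have hLowEnergy := le_bandEnergy_mul hβ₀.le hLow u
  have hβsq : β ^ 2 ≤ 1 := pow_le_one₀ hβ₀.le hβ₁
  have hden : 0 < bandEnergy ΩL u + ε := by linarith [bandEnergy_nonneg ΩL u]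
  calc highLowRatio ΩH ΩL ε (fun ω => H ω * u ω)
      ≤ α ^ 2 * bandEnergy ΩH u / (β ^ 2 * (bandEnergy ΩL u + ε)) := by
        refine div_le_div₀ ?_ (bandEnergy_mul_le hHigh u) (by positivity) ?_
        · exact (bandEnergy_nonneg _ _).trans (bandEnergy_mul_le hHigh u)
        · nlinarith
    _ = (α / β) ^ 2 * highLowRatio ΩH ΩL ε u := by
        rw [div_pow, mul_div_mul_comm, highLowRatio]

end BandEnergy

theorem interp_strictly_decreases_HL_general
    {Ω : Type*} (ΩH ΩL : Finset Ω) (ε : ℝ) (hε : 0 < ε)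
    (H_I : Ω → ℂ) (α β : ℝ) (hα : 0 < α) (hαβ : α < β) (hβ : β ≤ 1)
    (hHigh : ∀ ω ∈ ΩH, ‖H_I ω‖ ≤ α)
    (hLow : ∀ ω ∈ ΩL, β ≤ ‖H_I ω‖)
    (u : Ω → ℂ)
    (hpos : 0 < (∑ ω ∈ ΩH, ‖u ω‖ ^ 2) / ((∑ ω ∈ ΩL, ‖u ω‖ ^ 2) + ε)) :
    (∑ ω ∈ ΩH, ‖H_I ω * u ω‖ ^ 2) / ((∑ ω ∈ ΩL, ‖H_I ω * u ω‖ ^ 2) + ε)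
      < (∑ ω ∈ ΩH, ‖u ω‖ ^ 2) / ((∑ ω ∈ ΩL, ‖u ω‖ ^ 2) + ε) := by
  have hβ₀ : 0 < β := hα.trans hαβ
  have hfactor : (α / β) ^ 2 < 1 :=
    pow_lt_one₀ (div_pos hα hβ₀).le ((div_lt_one hβ₀).2 hαβ) two_ne_zero
  calc highLowRatio ΩH ΩL ε (fun ω => H_I ω * u ω)
      ≤ (α / β) ^ 2 * highLowRatio ΩH ΩL ε u := highLowRatio_mul_le hε hβ₀ hβ hHigh hLow u
    _ < highLowRatio ΩH ΩL ε u := mul_lt_of_lt_one_left hpos hfactor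

/-- If the band bounds satisfy `0 < α < β ≤ 1`, then a frequency-multiplicative
operator strictly decreases a positive high-to-low frequency energy ratio. -/
theorem interp_strictly_decreases_HL
    {Ω : Type*} [Fintype Ω] (ΩH ΩL : Finset Ω) (ε : ℝ) (hε : 0 < ε)
    (H_I : Ω → ℂ) (α β : ℝ) (hα : 0 < α) (hαβ : α < β) (hβ : β ≤ 1)
    (hHigh : ∀ ω ∈ ΩH, ‖H_I ω‖ ≤ α)
    (hLow : ∀ ω ∈ ΩL, β ≤ ‖H_I ω‖)
    (u : Ω → ℂ)
    (hpos : 0 < (∑ ω ∈ ΩH, ‖u ω‖ ^ 2) / ((∑ ω ∈ ΩL, ‖u ω‖ ^ 2) + ε)) :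
    (∑ ω ∈ ΩH, ‖H_I ω * u ω‖ ^ 2) / ((∑ ω ∈ ΩL, ‖H_I ω * u ω‖ ^ 2) + ε)
      < (∑ ω ∈ ΩH, ‖u ω‖ ^ 2) / ((∑ ω ∈ ΩL, ‖u ω‖ ^ 2) + ε) :=
  interp_strictly_decreases_HL_general ΩH ΩL ε hε H_I α β hα hαβ hβ hHigh hLow u hpos
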